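/- arXiv:2109.07328 — 2 statements merged into one kernel-verified Lean document; each statement's English description precedes it below -/
import Mathlib

section
/- For all positive integers k and r with 0 < r < M_k = 2^k - 1, we have s(M_k + r) = s(M_k) + s(r). -/
/-- `Alist k` is the list `A_{k+1}`: `A_1 = [5]`, `A_{k+1} = A_k ++ A_k ++ [1]`. -/
def Alist : ℕ → List ℕ
  | 0 => [5]
  | k+1 => Alist k ++ Alist k ++ [1]

/-- `aseq n` is the `n`-th term (1-indexed) of the limit of the lists `A_k`;
`aseq 0 = 0` by convention. -/
def aseq (n : ℕ) : ℕ := (Alist n).getD (n - 1) 0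

/-- Partial sums: `s n = a_1 + ⋯ + a_n`, `s 0 = 0`. -/
def s (n : ℕ) : ℕ := ∑ i ∈ Finset.Icc 1 n, aseq i

/-!
Since `A_{k+1} = A_k ++ A_k ++ [1]` and `A_k` has length `M_k`, the terms
`a_{M_k + 1}, …, a_{2 M_k}` repeat `a_1, …, a_{M_k}`; summing this periodicity over
`i ≤ r < M_k` splits `s(M_k + r)` as `s(M_k) + s(r)`.
-/

lemma Alist_length_succ (k : ℕ) : (Alist (k + 1)).length = 2 * (Alist k).length + 1 := by
  simp only [Alist, List.length_append, List.length_singleton]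
  ring

lemma Alist_length (k : ℕ) : (Alist k).length = 2 ^ (k + 1) - 1 := by
  induction k with
  | zero => rfl
  | succ k ih =>
    rw [Alist_length_succ, ih, pow_succ 2 (k + 1)]
    have : 1 ≤ 2 ^ (k + 1) := Nat.one_le_two_pow
    omega

lemma lt_length_Alist (k : ℕ) : k < (Alist k).length := by
  induction k with
  | zero => simp [Alist]
  | succ k ih => rw [Alist_length_succ]; omega

lemma Alist_prefix {k n : ℕ} (h : k ≤ n) : Alist k <+: Alist n := by
  induction n, h using Nat.le_induction with
  | base => exact List.prefix_refl _
  | succ n _ ih => exact ih.trans ⟨Alist n ++ [1], by simp [Alist]⟩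

lemma aseq_succ_eq_getElem {i k : ℕ} (h : i < (Alist k).length) :
    aseq (i + 1) = (Alist k)[i] := by
  have hi : i < (Alist (i + 1)).length := (lt_length_Alist (i + 1)).trans' i.lt_succ_self
  rw [aseq, Nat.add_sub_cancel, List.getD_eq_getElem _ _ hi,
    (Alist_prefix (le_max_left (i + 1) k)).getElem hi,
    (Alist_prefix (le_max_right (i + 1) k)).getElem h]

lemma aseq_length_Alist_add {i k : ℕ} (h : i < (Alist k).length) :
    aseq ((Alist k).length + i + 1) = aseq (i + 1) := by
  have h' : (Alist k).length + i < (Alist (k + 1)).length := by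
    rw [Alist_length_succ]; omega
  rw [aseq_succ_eq_getElem h', aseq_succ_eq_getElem h]
  simp only [Alist, List.append_assoc]
  rw [List.getElem_append_right (by omega), List.getElem_append_left (by simpa using h)]
  simp

lemma s_eq_sum_range (n : ℕ) : s n = ∑ i ∈ Finset.range n, aseq (i + 1) := by
  induction n with
  | zero => rfl
  | succ n ih => rw [s, Finset.sum_Icc_succ_top (by omega), ← s, ih, Finset.sum_range_succ]

theorem s_add_of_lt_mersenne_general (k r : ℕ)
    (hr : r < 2 ^ k - 1) :
    s ((2 ^ k - 1) + r) = s (2 ^ k - 1) + s r := by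
  obtain ⟨j, rfl⟩ : ∃ j, k = j + 1 :=
    Nat.exists_eq_add_one.mpr (Nat.pos_of_ne_zero (by rintro rfl; simp at hr))
  rw [← Alist_length] at hr ⊢
  simp only [s_eq_sum_range, Finset.sum_range_add]
  congr 1
  exact Finset.sum_congr rfl fun i hi => aseq_length_Alist_add ((Finset.mem_range.mp hi).trans hr)

/-- For positive integers `k`, `r` with `0 < r < M_k = 2^k − 1`,
`s(M_k + r) = s(M_k) + s(r)`. -/
theorem s_add_of_lt_mersenne (k r : ℕ) (hk : 1 ≤ k) (hr0 : 0 < r)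
    (hr : r < 2 ^ k - 1) :
    s ((2 ^ k - 1) + r) = s (2 ^ k - 1) + s r :=
  s_add_of_lt_mersenne_general k r hr
end

section
/- For the family h_k = 2^{k+2} − k, the μ-expansion of 2^{h_k} satisfies φ(2^{h_k}) = 2^{k+1}, and consequently α(h_k) → 1 as k → ∞; hence limsup_{h→∞} α(h) = 1. -/
/-- `μ_i = 2^{i+1} + 2^i - 1`. -/
def mu (i : ℕ) : ℕ := 2 ^ (i + 1) + 2 ^ i - 1

/-- The largest `ℓ ≥ 1` with `μ_ℓ ≤ n` (`0` if there is none). -/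
def maxMu (n : ℕ) : ℕ := Nat.findGreatest (fun ℓ => 0 < ℓ ∧ mu ℓ ≤ n) n

/-- `mudig n i` is the digit `ε_i` in the greedy μ-expansion
`n = r + ε_1·μ_1 + ⋯ + ε_ℓ·μ_ℓ` with `r ∈ {0,…,4}`. -/
def mudig (n : ℕ) : ℕ → ℕ :=
  if _h : n ≤ 4 then fun _ => 0
  else
    let ℓ := maxMu n
    let r := n - mu ℓ
    if r = mu ℓ then fun i => if i = ℓ then 2 else 0
    else fun i => (if i = ℓ then 1 else 0) + mudig r i
termination_by n
decreasing_by
  have h1 : 1 ≤ maxMu n :=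
    Nat.le_findGreatest (by omega) ⟨one_pos, by simp [mu]; omega⟩
  have h2 : 2 ≤ 2 ^ maxMu n := by
    calc (2 : ℕ) = 2 ^ 1 := rfl
    _ ≤ 2 ^ maxMu n := Nat.pow_le_pow_right (by norm_num) h1
  have : 5 ≤ mu (maxMu n) := by simp [mu]; omega
  omega

/-- Sum of the μ-digits of `m`. -/
def phi (m : ℕ) : ℕ := ∑ i ∈ Finset.Icc 1 m, mudig m i

/-- `α(h) = (2·φ(2^h) − (h+2)) / log₂(h+2)`. -/
noncomputable def alphaF (h : ℕ) : ℝ :=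
  (2 * (phi (2 ^ h) : ℝ) - (h + 2)) / Real.logb 2 (h + 2)

/-! The greedy expansion of `2^(m+2) + b` (for `b` not too large) starts with `μ_m` and leaves
`2^m + b + 1`, so peeling off `j` terms takes `2^(2j+c)` to `2^c + j`, one digit per step.
For `h_k = 2(2^{k+1} - k) + k` the chain ends at `3·2^k - k`, which peels down to `10 = 2μ_1` with
exactly `k` digits; hence `φ(2^{h_k}) = 2^{k+1}` and `α(h_k) = (k - 2) / log₂(h_k + 2) → 1`.
Conversely `2^{φ(n)} ≤ n + 1`, and stopping the chain at `c ≈ log₂(h + 2)` gives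
`2φ(2^h) ≤ h + log₂(h + 2) + 3`, i.e. `α(h) ≤ 1 + 1 / log₂(h + 2)`, so the limsup is `1`. -/

open Filter Topology

section Expansion

variable {ℓ n : ℕ}

lemma mu_eq (i : ℕ) : mu i = 3 * 2 ^ i - 1 := by
  rw [mu, pow_succ]; omega

lemma mu_succ (i : ℕ) : mu (i + 1) = 2 * mu i + 1 := by
  rw [mu_eq, mu_eq, pow_succ]
  have := Nat.one_le_two_pow (n := i)
  omega

lemma five_le_mu (hℓ : 1 ≤ ℓ) : 5 ≤ mu ℓ := by
  have := Nat.pow_le_pow_right two_pos hℓ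
  rw [mu_eq]; omega

lemma maxMu_eq (hℓ : 1 ≤ ℓ) (h₁ : mu ℓ ≤ n) (h₂ : n < mu (ℓ + 1)) : maxMu n = ℓ := by
  refine Nat.findGreatest_eq_iff.mpr ⟨?_, fun _ => ⟨hℓ, h₁⟩, fun k hk _ ⟨_, hk'⟩ => ?_⟩
  · have := Nat.lt_two_pow_self (n := ℓ)
    rw [mu_eq] at h₁; omega
  · have := Nat.pow_le_pow_right two_pos (show ℓ + 1 ≤ k from hk)
    rw [mu_eq] at h₂ hk'; omega

lemma exists_mu_le_le_two_mul_mu (hn : 5 ≤ n) :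
    ∃ ℓ, 1 ≤ ℓ ∧ mu ℓ ≤ n ∧ n ≤ 2 * mu ℓ := by
  have hP : 0 < 1 ∧ mu 1 ≤ n := ⟨one_pos, by simp [mu_eq]; omega⟩
  refine ⟨maxMu n, Nat.le_findGreatest (by omega) hP,
    (Nat.findGreatest_spec (P := fun ℓ => 0 < ℓ ∧ mu ℓ ≤ n) (by omega) hP).2, ?_⟩
  by_contra! hlt
  have hle : mu (maxMu n + 1) ≤ n := by rw [mu_succ]; omega
  have hmax : maxMu n + 1 ≤ n := by
    have := Nat.lt_two_pow_self (n := maxMu n + 1)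
    rw [mu_eq] at hle; omega
  exact Nat.findGreatest_is_greatest (Nat.lt_succ_self _) hmax ⟨Nat.succ_pos _, hle⟩

lemma lt_mu (i : ℕ) : i < mu i := by
  have := Nat.lt_two_pow_self (n := i)
  rw [mu_eq]; omega

lemma mudig_of_le_four (hn : n ≤ 4) (i : ℕ) : mudig n i = 0 := by
  rw [mudig, dif_pos hn]

lemma mudig_two_mul_mu (hℓ : 1 ≤ ℓ) (i : ℕ) :
    mudig (2 * mu ℓ) i = if i = ℓ then 2 else 0 := by
  have h₄ : ¬ 2 * mu ℓ ≤ 4 := by have := five_le_mu hℓ; omega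
  have hmax : maxMu (2 * mu ℓ) = ℓ := maxMu_eq hℓ (by omega) (by rw [mu_succ]; omega)
  rw [mudig, dif_neg h₄]
  simp only [hmax, show 2 * mu ℓ - mu ℓ = mu ℓ by omega, if_true]

lemma mudig_of_mu_le (hℓ : 1 ≤ ℓ) (h₁ : mu ℓ ≤ n) (h₂ : n < 2 * mu ℓ) (i : ℕ) :
    mudig n i = (if i = ℓ then 1 else 0) + mudig (n - mu ℓ) i := by
  have h₄ : ¬ n ≤ 4 := by have := five_le_mu hℓ; omega
  have hmax : maxMu n = ℓ := maxMu_eq hℓ h₁ (by rw [mu_succ]; omega)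
  rw [mudig, dif_neg h₄]
  simp only [hmax, show n - mu ℓ ≠ mu ℓ by omega, if_false]

lemma mudig_eq_zero_of_lt_mu {i : ℕ} (hi : n < mu i) : mudig n i = 0 := by
  induction n using Nat.strong_induction_on with
  | _ n ih =>
    rcases le_or_gt n 4 with h₄ | h₄
    · exact mudig_of_le_four h₄ i
    obtain ⟨ℓ, hℓ, h₁, h₂⟩ := exists_mu_le_le_two_mul_mu h₄
    have hℓi : ℓ ≠ i := fun h => by subst h; omega
    rcases h₂.lt_or_eq with h₂ | rfl
    · have := five_le_mu hℓ
      rw [mudig_of_mu_le hℓ h₁ h₂, if_neg hℓi.symm, ih _ (by omega) (by omega)]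
    · rw [mudig_two_mul_mu hℓ, if_neg hℓi.symm]

lemma sum_mudig_eq_phi {m : ℕ} (hmn : m ≤ n) : ∑ i ∈ Finset.Icc 1 n, mudig m i = phi m := by
  refine (Finset.sum_subset (Finset.Icc_subset_Icc_right hmn) fun i hi him => ?_).symm
  simp only [Finset.mem_Icc] at hi him
  exact mudig_eq_zero_of_lt_mu (by have := lt_mu i; omega)

lemma phi_of_le_four (hn : n ≤ 4) : phi n = 0 :=
  Finset.sum_eq_zero fun i _ => mudig_of_le_four hn i

lemma phi_two_mul_mu (hℓ : 1 ≤ ℓ) : phi (2 * mu ℓ) = 2 := by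
  have := lt_mu ℓ
  rw [phi, Finset.sum_congr rfl fun i _ => mudig_two_mul_mu hℓ i, Finset.sum_ite_eq']
  simp only [Finset.mem_Icc, ite_eq_left_iff]
  omega

lemma phi_of_mu_le (hℓ : 1 ≤ ℓ) (h₁ : mu ℓ ≤ n) (h₂ : n < 2 * mu ℓ) :
    phi n = phi (n - mu ℓ) + 1 := by
  have := lt_mu ℓ
  rw [phi, Finset.sum_congr rfl fun i _ => mudig_of_mu_le hℓ h₁ h₂ i, Finset.sum_add_distrib,
    Finset.sum_ite_eq', sum_mudig_eq_phi (Nat.sub_le n _), add_comm,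
    if_pos (Finset.mem_Icc.mpr ⟨hℓ, by omega⟩)]

-- Each greedy step removes `μ_ℓ ≥ (n + 1) / 2`, so at least halves `n + 1`.
lemma two_pow_phi_le (n : ℕ) : 2 ^ phi n ≤ n + 1 := by
  induction n using Nat.strong_induction_on with
  | _ n ih =>
    rcases le_or_gt n 4 with h₄ | h₄
    · rw [phi_of_le_four h₄]; omega
    obtain ⟨ℓ, hℓ, h₁, h₂⟩ := exists_mu_le_le_two_mul_mu h₄
    have := five_le_mu hℓ
    rcases h₂.lt_or_eq with h₂ | rfl
    · have := ih (n - mu ℓ) (by omega)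
      rw [phi_of_mu_le hℓ h₁ h₂, pow_succ]; omega
    · rw [phi_two_mul_mu hℓ]; omega

end Expansion

section PowersOfTwo

variable {b c j k m s : ℕ}

lemma phi_two_pow_add (hm : 1 ≤ m) (hb : b + 3 ≤ 2 ^ (m + 1)) :
    phi (2 ^ (m + 2) + b) = phi (2 ^ m + (b + 1)) + 1 := by
  have hmu := mu_eq m
  rw [pow_succ] at hb
  rw [phi_of_mu_le hm (by rw [pow_succ, pow_succ]; omega) (by rw [pow_succ, pow_succ]; omega)]
  congr 2
  rw [pow_succ, pow_succ]; omega

lemma phi_two_pow_two_mul_add (hc : 1 ≤ c) (h : b + j + 2 ≤ 2 ^ (c + 1)) :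
    phi (2 ^ (2 * j + c) + b) = phi (2 ^ c + (b + j)) + j := by
  induction j generalizing c with
  | zero => simp
  | succ j ih =>
    have hmono := Nat.pow_le_pow_right two_pos (show c + 1 ≤ c + 2 + 1 by omega)
    rw [show 2 * (j + 1) + c = 2 * j + (c + 2) by ring, ih (by omega) (by omega),
      phi_two_pow_add hc (by omega)]
    ring_nf

lemma phi_three_mul_two_pow_sub (hs : 2 ≤ s) : phi (3 * 2 ^ s - s) = s := by
  induction s, hs using Nat.le_induction with
  | base => simpa [mu] using phi_two_mul_mu (ℓ := 1) le_rfl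
  | succ s hs ih =>
    have hs' : s < 2 ^ s := Nat.lt_two_pow_self
    have hmu := mu_eq s
    rw [phi_of_mu_le (ℓ := s) (by omega) (by rw [pow_succ]; omega) (by rw [pow_succ]; omega),
      show 3 * 2 ^ (s + 1) - (s + 1) - mu s = 3 * 2 ^ s - s by rw [pow_succ]; omega, ih]

theorem phi_two_pow_two_pow_sub (hk : 1 ≤ k) :
    phi (2 ^ (2 ^ (k + 2) - k)) = 2 ^ (k + 1) := by
  rcases hk.lt_or_eq with hk | rfl
  · have hk' : k < 2 ^ k := Nat.lt_two_pow_self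
    have hchain := phi_two_pow_two_mul_add (b := 0) (j := 2 ^ (k + 1) - k) (c := k) (by omega)
      (by rw [pow_succ]; omega)
    rw [Nat.add_zero, zero_add] at hchain
    rw [show 2 ^ (k + 2) - k = 2 * (2 ^ (k + 1) - k) + k by rw [pow_succ, pow_succ]; omega,
      hchain, show 2 ^ k + (2 ^ (k + 1) - k) = 3 * 2 ^ k - k by rw [pow_succ]; omega,
      phi_three_mul_two_pow_sub hk]
    rw [pow_succ]; omega
  · have hchain := phi_two_pow_two_mul_add (b := 0) (j := 2) (c := 3) (by omega) (by norm_num)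
    have h10 := phi_three_mul_two_pow_sub (le_refl 2)
    norm_num at hchain h10 ⊢
    omega

lemma phi_two_pow_two_mul_add_le (hc : 1 ≤ c) (h : j + 2 ≤ 2 ^ (c + 1)) :
    phi (2 ^ (2 * j + c)) ≤ j + c + 1 := by
  have htail : phi (2 ^ c + j) < c + 2 := by
    refine (Nat.pow_lt_pow_iff_right (Nat.one_lt_two)).mp ((two_pow_phi_le _).trans_lt ?_)
    rw [pow_succ] at h; rw [pow_succ, pow_succ]; omega
  have := phi_two_pow_two_mul_add (b := 0) hc (by omega : 0 + j + 2 ≤ _)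
  simp only [Nat.add_zero, zero_add] at this
  omega

theorem two_mul_phi_two_pow_le {h : ℕ} (hh : 3 ≤ h) :
    2 * phi (2 ^ h) ≤ h + Nat.log 2 (h + 2) + 3 := by
  set L := Nat.log 2 (h + 2)
  have hL₁ : 1 ≤ L := Nat.log_pos one_lt_two (by omega)
  have hLh : L < h := Nat.log_lt_of_lt_pow (by omega) (by
    obtain ⟨h', rfl⟩ : ∃ h', h = h' + 1 := ⟨h - 1, by omega⟩
    have := Nat.lt_two_pow_self (n := h')
    rw [pow_succ]; omega)
  have hpow : h + 2 < 2 ^ (L + 1) := Nat.lt_pow_succ_log_self one_lt_two _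
  have hpow' : 2 ^ (L + 1) ≤ 2 ^ (L + 1 + 1) := Nat.pow_le_pow_right two_pos (by omega)
  obtain ⟨j, hj | hj⟩ := Nat.even_or_odd' (h - L)
  · have := phi_two_pow_two_mul_add_le (j := j) hL₁ (by omega)
    rw [show 2 * j + L = h by omega] at this
    omega
  · have := phi_two_pow_two_mul_add_le (j := j) (c := L + 1) (by omega) (by omega)
    rw [show 2 * j + (L + 1) = h by omega] at this
    omega

end PowersOfTwo

lemma add_three_le_two_pow_add_two_sub (k : ℕ) : k + 3 ≤ 2 ^ (k + 2) - k := by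
  have := Nat.lt_two_pow_self (n := k)
  rw [pow_succ, pow_succ]; omega

theorem Filter.limsup_eq_of_tendsto_comp_of_eventuallyLE {α β : Type*} {l : Filter α}
    {l' : Filter β} [l'.NeBot] {f g : α → ℝ} {v : β → α} {a : ℝ} (hv : Tendsto v l' l)
    (hfv : Tendsto (f ∘ v) l' (𝓝 a)) (hfg : f ≤ᶠ[l] g) (hg : Tendsto g l (𝓝 a)) :
    limsup f l = a := by
  have := hv.neBot
  have hbdd : IsBoundedUnder (· ≤ ·) l f := hg.isBoundedUnder_le.mono_le hfg
  refine le_antisymm ?_ ?_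
  · have hcobdd : IsCoboundedUnder (· ≤ ·) l f :=
      .of_frequently_ge
        (hv.frequently (hfv.eventually (eventually_ge_nhds (sub_one_lt a))).frequently)
    exact (limsup_le_limsup hfg hcobdd hg.isBoundedUnder_le).trans_eq hg.limsup_eq
  · rw [← hfv.limsup_eq]
    refine hv.limsup_comp_le_limsup ?_ hbdd
    rw [IsCoboundedUnder, map_map]
    exact hfv.isCoboundedUnder_le

section Asymptotics

open Real

lemma alphaF_le {h : ℕ} (hh : 3 ≤ h) : alphaF h ≤ 1 + 1 / logb 2 (h + 2) := by
  have hL : (Nat.log 2 (h + 2) : ℝ) ≤ logb 2 (h + 2) := by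
    exact_mod_cast natLog_le_logb (h + 2) 2
  have hbound : (2 * phi (2 ^ h) : ℝ) ≤ h + Nat.log 2 (h + 2) + 3 := by
    exact_mod_cast two_mul_phi_two_pow_le hh
  have hpos : 0 < logb 2 ((h : ℝ) + 2) :=
    logb_pos one_lt_two (by linarith [(h.cast_nonneg : (0 : ℝ) ≤ h)])
  rw [alphaF, div_le_iff₀ hpos, add_mul, one_div_mul_cancel hpos.ne']
  linarith

lemma one_sub_le_alphaF_two_pow_sub {k : ℕ} (hk : 2 ≤ k) :
    1 - 4 / (k + 2) ≤ alphaF (2 ^ (k + 2) - k) := by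
  have hk' := add_three_le_two_pow_add_two_sub k
  have hkR : (2 : ℝ) ≤ k := by exact_mod_cast hk
  have hcast : ((2 ^ (k + 2) - k : ℕ) : ℝ) + 2 = 2 ^ (k + 2) - (k - 2) := by
    rw [Nat.cast_sub (by omega)]; push_cast; ring
  have hge : 1 < ((2 ^ (k + 2) - k : ℕ) : ℝ) + 2 := by
    have : (1 : ℝ) ≤ ((2 ^ (k + 2) - k : ℕ) : ℝ) := by exact_mod_cast (by omega : 1 ≤ _)
    linarith
  have hpos := logb_pos one_lt_two hge
  have hlog : logb 2 (((2 ^ (k + 2) - k : ℕ) : ℝ) + 2) ≤ k + 2 := by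
    rw [logb_le_iff_le_rpow one_lt_two (by linarith), hcast]
    rw [show (k : ℝ) + 2 = ((k + 2 : ℕ) : ℝ) by push_cast; ring, rpow_natCast]
    linarith
  have hnum :
      2 * (phi (2 ^ (2 ^ (k + 2) - k)) : ℝ) - (((2 ^ (k + 2) - k : ℕ) : ℝ) + 2) = k - 2 := by
    rw [phi_two_pow_two_pow_sub (by omega), hcast]; push_cast; ring
  rw [alphaF, hnum, show (1 : ℝ) - 4 / (k + 2) = (k - 2) / (k + 2) by field_simp; ring]
  exact div_le_div_of_nonneg_left (by linarith) hpos hlog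

lemma tendsto_one_add_one_div_logb :
    Tendsto (fun h : ℕ => 1 + 1 / logb 2 ((h : ℝ) + 2)) atTop (𝓝 1) := by
  have := (tendsto_logb_atTop one_lt_two).comp (tendsto_natCast_atTop_atTop.atTop_add
    (tendsto_const_nhds (x := (2 : ℝ))))
  simpa using (tendsto_const_nhds (x := (1 : ℝ))).add
    ((tendsto_const_nhds (x := (1 : ℝ))).div_atTop this)

lemma tendsto_two_pow_sub : Tendsto (fun k : ℕ => 2 ^ (k + 2) - k) atTop atTop := by
  refine tendsto_atTop_mono (fun k => ?_) tendsto_id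
  have := add_three_le_two_pow_add_two_sub k
  rw [id]; omega

lemma tendsto_alphaF_two_pow_sub :
    Tendsto (fun k : ℕ => alphaF (2 ^ (k + 2) - k)) atTop (𝓝 1) := by
  have hlower : Tendsto (fun k : ℕ => 1 - 4 / ((k : ℝ) + 2)) atTop (𝓝 1) := by
    simpa using tendsto_const_nhds.sub (tendsto_const_nhds.div_atTop
      (tendsto_natCast_atTop_atTop.atTop_add (tendsto_const_nhds (x := (2 : ℝ)))))
  refine tendsto_of_tendsto_of_tendsto_of_le_of_le' hlower
    (tendsto_one_add_one_div_logb.comp tendsto_two_pow_sub)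
    ((eventually_ge_atTop 2).mono fun _ => one_sub_le_alphaF_two_pow_sub)
    (.of_forall fun k => ?_)
  simpa using alphaF_le (le_of_add_le_right (add_three_le_two_pow_add_two_sub k))

end Asymptotics

/-- For the family `h_k = 2^{k+2} − k`, `φ(2^{h_k}) = 2^{k+1}`; consequently
`α(h_k) → 1` as `k → ∞`, and `limsup_{h→∞} α(h) = 1`. -/
theorem alpha_limsup :
    (∀ k : ℕ, 1 ≤ k → phi (2 ^ (2 ^ (k + 2) - k)) = 2 ^ (k + 1)) ∧
    Filter.Tendsto (fun k : ℕ => alphaF (2 ^ (k + 2) - k))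
      Filter.atTop (nhds 1) ∧
    Filter.limsup alphaF Filter.atTop = 1 := by
  have hupper : ∀ᶠ h in atTop, alphaF h ≤ 1 + 1 / Real.logb 2 (h + 2) :=
    (eventually_ge_atTop 3).mono fun _ => alphaF_le
  have hsub := tendsto_alphaF_two_pow_sub
  exact ⟨fun _ => phi_two_pow_two_pow_sub, hsub,
    limsup_eq_of_tendsto_comp_of_eventuallyLE tendsto_two_pow_sub hsub hupper
      tendsto_one_add_one_div_logb⟩
end
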